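/- arXiv:2410.17945 — 5 statements merged into one kernel-verified Lean document; each statement's English description precedes it below -/
import Mathlib

section
/- Let f be a monotone γ-submodular set function with f(∅) ≥ 0, and let δ, κ > 0. Suppose A_m = {a_1, …, a_m} is built by adding elements one at a time where each a_i satisfies c(a_i) ≤ κ and f(A_{i-1} ∪ {a_i}) − f(A_{i-1}) ≥ γ·δ·c(a_i)·f(A_{i-1})/κ. Let a* be an element with f({a*}) ≥ max_i f({a_i}) and c(a*) ≤ κ. Then there exists A* ⊆ A_m ∪ {a*} with c(A*) ≤ κ and f(A*) ≥ (δγ⁴ / (2(δγ² + 1)))·f(A_m). -/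
set_option maxHeartbeats 1600000 in
/-- Lemma (value-inside-A): if `A m` is built by sequentially adding elements whose
marginal gain meets the threshold `γ δ c(aᵢ) f(A_{i-1}) / κ`, and `a*` is an element of
maximum singleton value with `c(a*) ≤ κ`, then `A m ∪ {a*}` contains a feasible set
`A*` with `f(A*) ≥ (δγ⁴ / (2(δγ² + 1))) f(A m)`. -/
theorem value_inside_A {U : Type*} [DecidableEq U]
    (f : Finset U → ℝ) (c : U → ℝ) (γ δ κ : ℝ) (m : ℕ)
    (a : ℕ → U) (astar : U) (A : ℕ → Finset U)
    (hγ0 : 0 < γ) (hγ1 : γ ≤ 1) (hδ : 0 < δ) (hκ : 0 < κ)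
    (hc : ∀ u, 0 ≤ c u)
    (hf0 : 0 ≤ f ∅)
    (hmono : ∀ S T : Finset U, S ⊆ T → f S ≤ f T)
    (hsub : ∀ (S T : Finset U) (x : U), S ⊆ T → x ∉ T →
      γ * (f (insert x T) - f T) ≤ f (insert x S) - f S)
    (hA0 : A 0 = ∅)
    (hAstep : ∀ i, 1 ≤ i → i ≤ m → A i = insert (a i) (A (i - 1)))
    (hnew : ∀ i, 1 ≤ i → i ≤ m → a i ∉ A (i - 1))
    (hcost : ∀ i, 1 ≤ i → i ≤ m → c (a i) ≤ κ)
    (hgain : ∀ i, 1 ≤ i → i ≤ m →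
      f (A (i - 1) ∪ {a i}) - f (A (i - 1)) ≥ γ * δ * c (a i) * f (A (i - 1)) / κ)
    (hastar : ∀ i, 1 ≤ i → i ≤ m → f {a i} ≤ f {astar})
    (hastarc : c astar ≤ κ) :
    ∃ Astar ⊆ A m ∪ {astar}, (∑ x ∈ Astar, c x) ≤ κ ∧
      f Astar ≥ (δ * γ ^ 4 / (2 * (δ * γ ^ 2 + 1))) * f (A m) := by
  classical
  set ρ : ℝ := δ * γ ^ 4 / (2 * (δ * γ ^ 2 + 1)) with hρ
  have hfnn : ∀ S : Finset U, 0 ≤ f S := fun S =>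
    le_trans hf0 (hmono ∅ S (Finset.empty_subset S))
  -- chain property
  have hchain : ∀ i j : ℕ, i ≤ j → j ≤ m → A i ⊆ A j := by
    intro i j hij hjm
    induction j with
    | zero =>
      have : i = 0 := by omega
      subst this; exact subset_rfl
    | succ n ih =>
      rcases Nat.lt_or_ge i (n + 1) with h | h
      · have hstep := hAstep (n + 1) (by omega) hjm
        simp only [Nat.add_sub_cancel] at hstep
        rw [hstep]
        exact (ih (by omega) (by omega)).trans (Finset.subset_insert _ _)
      · have : i = n + 1 := by omega
        subst this; exact subset_rfl
  have hfchain : ∀ i j : ℕ, i ≤ j → j ≤ m → f (A i) ≤ f (A j) := by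
    intro i j hij hjm; exact hmono _ _ (hchain i j hij hjm)
  have hmem : ∀ j, 1 ≤ j → j ≤ m → a j ∈ A j := by
    intro j h1 h2; rw [hAstep j h1 h2]; exact Finset.mem_insert_self _ _
  -- gains in insert form
  have hgain' : ∀ i, 1 ≤ i → i ≤ m →
      γ * δ * c (a i) * f (A (i - 1)) / κ ≤ f (A i) - f (A (i - 1)) := by
    intro i h1 h2
    have := hgain i h1 h2
    have he : A (i - 1) ∪ {a i} = A i := by
      rw [hAstep i h1 h2]; ext y; simp [or_comm]
    rw [he] at this
    exact this
  have hgain0 : ∀ i, 1 ≤ i → i ≤ m → 0 ≤ f (A i) - f (A (i - 1)) := by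
    intro i h1 h2
    refine le_trans ?_ (hgain' i h1 h2)
    have h3 := hc (a i); have h4 := hfnn (A (i - 1))
    positivity
  -- single step value bounded by f {astar}
  have hstepval : ∀ i, 1 ≤ i → i ≤ m → γ * (f (A i) - f (A (i - 1))) ≤ f {astar} := by
    intro i h1 h2
    have h := hsub ∅ (A (i - 1)) (a i) (Finset.empty_subset _) (hnew i h1 h2)
    rw [← hAstep i h1 h2] at h
    have : f (insert (a i) ∅) = f {a i} := by norm_num
    rw [this] at h
    have := hastar i h1 h2
    linarith
  -- tail value lemma
  have htailval : ∀ l i : ℕ, l ≤ i → i ≤ m →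
      γ * (f (A i) - f (A l)) ≤ f ((Finset.Ioc l i).image a) - f ∅ := by
    intro l i hli
    induction i, hli using Nat.le_induction with
    | base => intro _; simp
    | succ n hln ih =>
      intro him
      have hnm : n ≤ m := by omega
      have hioc : Finset.Ioc l (n + 1) = insert (n + 1) (Finset.Ioc l n) := by
        ext j; simp [Finset.mem_Ioc, Finset.mem_insert]; omega
      have hBsub : (Finset.Ioc l n).image a ⊆ A n := by
        intro x hx
        simp only [Finset.mem_image, Finset.mem_Ioc] at hx
        obtain ⟨j, ⟨hj1, hj2⟩, rfl⟩ := hx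
        exact hchain j n hj2 hnm (hmem j (by omega) (by omega))
      have hnewn : a (n + 1) ∉ A n := by
        have := hnew (n + 1) (by omega) him
        simpa using this
      have hstep : A (n + 1) = insert (a (n + 1)) (A n) := by
        have := hAstep (n + 1) (by omega) him
        simpa using this
      have hkey := hsub ((Finset.Ioc l n).image a) (A n) (a (n + 1)) hBsub hnewn
      rw [← hstep] at hkey
      rw [hioc, Finset.image_insert]
      have ih' := ih hnm
      linarith
  -- tail cost-gain lemma
  have htailgain : ∀ l i : ℕ, l ≤ i → i ≤ m →
      γ * δ * f (A l) / κ * (∑ j ∈ Finset.Ioc l i, c (a j)) ≤ f (A i) - f (A l) := by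
    intro l i hli
    induction i, hli using Nat.le_induction with
    | base => intro _; simp
    | succ n hln ih =>
      intro him
      have hnm : n ≤ m := by omega
      rw [Finset.sum_Ioc_succ_top hln]
      have hg := hgain' (n + 1) (by omega) him
      simp only [Nat.add_sub_cancel] at hg
      have hmonoc : γ * δ * c (a (n + 1)) * f (A l) / κ ≤
          γ * δ * c (a (n + 1)) * f (A n) / κ := by
        have h1 := hfchain l n hln hnm
        have h2 := hc (a (n + 1))
        have h3 : γ * δ * c (a (n + 1)) * f (A l) ≤ γ * δ * c (a (n + 1)) * f (A n) := by
          nlinarith [mul_le_mul_of_nonneg_left h1 (show (0:ℝ) ≤ γ * δ * c (a (n + 1)) by positivity)]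
        exact (div_le_div_iff_of_pos_right hκ).mpr h3
      have ih' := ih hnm
      have expand : γ * δ * f (A l) / κ * ((∑ j ∈ Finset.Ioc l n, c (a j)) + c (a (n + 1)))
          = γ * δ * f (A l) / κ * (∑ j ∈ Finset.Ioc l n, c (a j))
            + γ * δ * c (a (n + 1)) * f (A l) / κ := by ring
      rw [expand]
      linarith
  -- injectivity on [1, m]
  have hinj : ∀ i j, 1 ≤ i → i ≤ m → 1 ≤ j → j ≤ m → a i = a j → i = j := by
    intro i j hi1 him hj1 hjm hij
    by_contra hne
    wlog h : i < j generalizing i j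
    · exact this j i hj1 hjm hi1 him hij.symm (Ne.symm hne) (by omega)
    have h1 : a i ∈ A (j - 1) := hchain i (j - 1) (by omega) (by omega) (hmem i hi1 him)
    rw [hij] at h1
    exact hnew j hj1 hjm h1
  -- cost of image over Ioc l m
  have himgcost : ∀ l : ℕ, (∑ x ∈ (Finset.Ioc l m).image a, c x) =
      ∑ j ∈ Finset.Ioc l m, c (a j) := by
    intro l
    refine Finset.sum_image ?_
    intro i hi j hj hij
    simp only [Finset.coe_Ioc, Set.mem_Ioc, Finset.mem_coe, Finset.mem_Ioc] at hi hj
    exact hinj i j (by omega) hi.2 (by omega) hj.2 hij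
  -- choose l minimal with feasible tail
  have hex : ∃ l : ℕ, (∑ j ∈ Finset.Ioc l m, c (a j)) ≤ κ := ⟨m, by simp [hκ.le]⟩
  obtain ⟨l, hlfeas, hlmin⟩ : ∃ l : ℕ, (∑ j ∈ Finset.Ioc l m, c (a j)) ≤ κ ∧
      ∀ j, j < l → ¬ ((∑ j' ∈ Finset.Ioc j m, c (a j')) ≤ κ) :=
    ⟨Nat.find hex, Nat.find_spec hex, fun j hj => Nat.find_min hex hj⟩
  have hlm : l ≤ m := by
    by_contra hcon
    exact hlmin m (by omega) (by simp [hκ.le])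
  set F := f (A m) with hF
  have hF0 : 0 ≤ F := hfnn _
  -- ρ bounds
  have hden : 0 < δ * γ ^ 2 + 1 := by positivity
  have hden2 : 0 < γ * δ + 1 := by positivity
  rcases Nat.eq_zero_or_pos l with hl0 | hlpos
  · -- A m itself is feasible
    refine ⟨A m, Finset.subset_union_left, ?_, ?_⟩
    · have hsubim : A m ⊆ (Finset.Ioc 0 m).image a := by
        intro x hx
        -- show every element of A m is some a j
        have : ∀ i, i ≤ m → A i ⊆ (Finset.Ioc 0 i).image a := by
          intro i him
          induction i with
          | zero => simp [hA0]
          | succ n ih =>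
            have hstep : A (n + 1) = insert (a (n + 1)) (A n) := by
              have := hAstep (n + 1) (by omega) him
              simpa using this
            rw [hstep]
            intro y hy
            rcases Finset.mem_insert.mp hy with rfl | hy
            · exact Finset.mem_image.mpr ⟨n + 1, by simp, rfl⟩
            · have := ih (by omega) hy
              simp only [Finset.mem_image, Finset.mem_Ioc] at this ⊢
              obtain ⟨j, hj, rfl⟩ := this
              exact ⟨j, ⟨hj.1, by omega⟩, rfl⟩
        exact this m le_rfl hx
      calc (∑ x ∈ A m, c x) ≤ ∑ x ∈ (Finset.Ioc 0 m).image a, c x :=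
            Finset.sum_le_sum_of_subset_of_nonneg hsubim (fun x _ _ => hc x)
        _ = ∑ j ∈ Finset.Ioc 0 m, c (a j) := himgcost 0
        _ ≤ κ := by rw [hl0] at hlfeas; exact hlfeas
    · have hρ1 : ρ ≤ 1 := by
        rw [hρ]
        rw [div_le_one (by positivity)]
        have h42 : γ ^ 4 ≤ γ ^ 2 := pow_le_pow_of_le_one hγ0.le hγ1 (by norm_num)
        nlinarith [hδ.le]
      have h2 : ρ * F ≤ 1 * F := mul_le_mul_of_nonneg_right hρ1 hF0
      rw [one_mul] at h2
      exact h2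
  · -- l ≥ 1
    have hl1 : 1 ≤ l := hlpos
    have hnotfeas : κ < ∑ j ∈ Finset.Ioc (l - 1) m, c (a j) := by
      have := hlmin (l - 1) (by omega)
      linarith [lt_of_not_ge this]
    set x := f {astar} with hxdef
    have hx0 : 0 ≤ x := hfnn _
    set T := (Finset.Ioc l m).image a with hT
    have hTsubA : T ⊆ A m := by
      intro y hy
      simp only [hT, Finset.mem_image, Finset.mem_Ioc] at hy
      obtain ⟨j, ⟨hj1, hj2⟩, rfl⟩ := hy
      exact hchain j m hj2 le_rfl (hmem j (by omega) hj2)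
    -- step bound at l
    have hstepl : γ * (f (A l) - f (A (l - 1))) ≤ x := by
      have := hstepval l hl1 hlm
      linarith
    -- key claim: F - f (A l) ≥ γ*δ*h*F - x/γ  with h = 1/(γδ+1)
    set h : ℝ := 1 / (γ * δ + 1) with hh
    have hh0 : 0 < h := by positivity
    have hkey : γ * δ * h * F - x / γ ≤ F - f (A l) := by
      rcases le_or_gt (h * F) (f (A (l - 1))) with hcase | hcase
      · -- large prefix value: tail crossed budget with high gains
        have hm1 : f (A m) - f (A (l - 1)) ≥ γ * δ * f (A (l - 1)) / κ *
            (∑ j ∈ Finset.Ioc (l - 1) m, c (a j)) := htailgain (l - 1) m (by omega) le_rfl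
        have hcoef : 0 ≤ γ * δ * f (A (l - 1)) / κ := by
          have := hfnn (A (l - 1)); positivity
        have h2 : γ * δ * f (A (l - 1)) / κ * κ ≤
            γ * δ * f (A (l - 1)) / κ * (∑ j ∈ Finset.Ioc (l - 1) m, c (a j)) :=
          mul_le_mul_of_nonneg_left hnotfeas.le hcoef
        have h3 : γ * δ * f (A (l - 1)) / κ * κ = γ * δ * f (A (l - 1)) := by
          field_simp
        have h4 : γ * δ * (h * F) ≤ γ * δ * f (A (l - 1)) := by
          have : 0 ≤ γ * δ := by positivity
          exact mul_le_mul_of_nonneg_left hcase this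
        have h5 : γ * δ * h * F ≤ f (A m) - f (A (l - 1)) := by nlinarith
        have h6 : f (A l) - f (A (l - 1)) ≤ x / γ := by
          rw [le_div_iff₀ hγ0]
          linarith [hstepl]
        linarith
      · -- small prefix value: use F - hF = γδ h F
        have h6 : f (A l) - f (A (l - 1)) ≤ x / γ := by
          rw [le_div_iff₀ hγ0]
          linarith [hstepl]
        have hid : F - h * F = γ * δ * h * F := by
          have : (1 - h) = γ * δ * h := by
            rw [hh]; field_simp; ring
          nlinarith [this]
        nlinarith
    -- tail value
    have hTval : γ * (F - f (A l)) ≤ f T := by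
      have := htailval l m hlm le_rfl
      rw [← hT] at this
      linarith
    have hTval2 : γ * γ * δ * h * F - x ≤ f T := by
      have h1 : γ * (γ * δ * h * F - x / γ) ≤ γ * (F - f (A l)) :=
        mul_le_mul_of_nonneg_left hkey hγ0.le
      have h2 : γ * (γ * δ * h * F - x / γ) = γ * γ * δ * h * F - x := by
        field_simp
      linarith
    -- ρ * F ≤ γ²δhF/2
    have hρle : ρ * F ≤ γ * γ * δ * h * F / 2 := by
      have hineq : ρ ≤ γ * γ * δ * h / 2 := by
        have hr : γ * γ * δ * h / 2 = γ ^ 2 * δ / (2 * (γ * δ + 1)) := by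
          rw [hh]; field_simp
        rw [hρ, hr, div_le_div_iff₀ (by positivity) (by positivity)]
        have h45 : γ ^ 5 ≤ γ ^ 4 := pow_le_pow_of_le_one hγ0.le hγ1 (by norm_num)
        have h42 : γ ^ 4 ≤ γ ^ 2 := pow_le_pow_of_le_one hγ0.le hγ1 (by norm_num)
        nlinarith [mul_le_mul_of_nonneg_left h45 (show (0:ℝ) ≤ 2 * δ ^ 2 by positivity),
          mul_le_mul_of_nonneg_left h42 (show (0:ℝ) ≤ 2 * δ by positivity)]
      nlinarith
    rcases le_or_gt (γ * γ * δ * h * F / 2) x with hbig | hbig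
    · -- take {astar}
      refine ⟨{astar}, ?_, ?_, ?_⟩
      · intro y hy; simp at hy; subst hy; simp
      · simpa using hastarc
      · calc ρ * F ≤ γ * γ * δ * h * F / 2 := hρle
          _ ≤ x := hbig
    · -- take T
      refine ⟨T, hTsubA.trans Finset.subset_union_left, ?_, ?_⟩
      · rw [hT, himgcost l]; exact hlfeas
      · have : γ * γ * δ * h * F / 2 ≤ f T := by linarith
        linarith [hρle]
end

section
/- Let f be a monotone γ-submodular nonnegative set function on a finite ground set U of size n, c a modular cost function, κ > 0, and δ > 0. Let Â be all elements ever added by the QuickPrune-Single greedy pass, where an element o not added satisfies the failed threshold condition f(A_{j(o)} ∪ {o}) − f(A_{j(o)}) < δ·c(o)·f(A_{j(o)})/κ at the time j(o) it was processed, with A_{j(o)} ⊆ Â. Then f(Â) ≥ OPT/(1 + γ⁻¹δ), where OPT = max{ f(S) : S ⊆ U, c(S) ≤ κ }. -/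
/-- Proposition (opt-ahat): if every element `o` not in `Â` failed the threshold test
against some subset `A_{j(o)} ⊆ Â`, then `f(Â) ≥ OPT / (1 + γ⁻¹ δ)`, stated as
`f(Â) ≥ f(S) / (1 + γ⁻¹ δ)` for every feasible `S`. -/
theorem opt_ahat {U : Type*} [DecidableEq U] [Fintype U]
    (f : Finset U → ℝ) (c : U → ℝ) (γ δ κ : ℝ)
    (hγ0 : 0 < γ) (hγ1 : γ ≤ 1) (hδ : 0 < δ) (hκ : 0 < κ)
    (hc : ∀ u, 0 ≤ c u)
    (hnn : ∀ S : Finset U, 0 ≤ f S)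
    (hmono : ∀ S T : Finset U, S ⊆ T → f S ≤ f T)
    (hsub : ∀ (S T : Finset U) (x : U), S ⊆ T → x ∉ T →
      γ * (f (insert x T) - f T) ≤ f (insert x S) - f S)
    (Ahat : Finset U)
    (hreject : ∀ o : U, o ∉ Ahat → ∃ Aj ⊆ Ahat,
      f (insert o Aj) - f Aj < δ * c o * f Aj / κ) :
    ∀ S : Finset U, (∑ x ∈ S, c x) ≤ κ → f Ahat ≥ f S / (1 + γ⁻¹ * δ) := by
  intro S hS
  -- key inductive bound
  have key : ∀ B : Finset U, (∀ o ∈ B, o ∉ Ahat) →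
      f (Ahat ∪ B) ≤ f Ahat + ∑ o ∈ B, γ⁻¹ * (δ * c o * f Ahat / κ) := by
    intro B
    induction B using Finset.induction_on with
    | empty => intro _; simp
    | @insert a B ha ih =>
      intro hB
      have haA : a ∉ Ahat := hB a (Finset.mem_insert_self a B)
      have hB' : ∀ o ∈ B, o ∉ Ahat := fun o ho => hB o (Finset.mem_insert_of_mem ho)
      obtain ⟨Aj, hAjsub, hthr⟩ := hreject a haA
      have hanot : a ∉ Ahat ∪ B := by
        simp [Finset.mem_union, haA, ha]
      have hsub' := hsub Aj (Ahat ∪ B) a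
        (hAjsub.trans Finset.subset_union_left) hanot
      have hfAj : f Aj ≤ f Ahat := hmono _ _ hAjsub
      have hca := hc a
      have hcoef : 0 ≤ δ * c a / κ := by positivity
      have h1 : δ * c a * f Aj / κ ≤ δ * c a * f Ahat / κ := by
        have := mul_le_mul_of_nonneg_left hfAj hcoef
        calc δ * c a * f Aj / κ = δ * c a / κ * f Aj := by ring
          _ ≤ δ * c a / κ * f Ahat := this
          _ = δ * c a * f Ahat / κ := by ring
      have h2 : γ * (f (insert a (Ahat ∪ B)) - f (Ahat ∪ B)) ≤ δ * c a * f Ahat / κ :=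
        le_trans hsub' (le_trans hthr.le h1)
      have h3 : f (insert a (Ahat ∪ B)) - f (Ahat ∪ B) ≤ γ⁻¹ * (δ * c a * f Ahat / κ) := by
        exact (le_inv_mul_iff₀ hγ0).mpr h2
      have hunion : Ahat ∪ insert a B = insert a (Ahat ∪ B) := by
        ext x
        simp only [Finset.mem_union, Finset.mem_insert]
        tauto
      rw [hunion, Finset.sum_insert ha]
      have := ih hB'
      linarith
  have hSsub : S ⊆ Ahat ∪ (S \ Ahat) := by
    intro x hx
    by_cases h : x ∈ Ahat <;> simp [Finset.mem_union, Finset.mem_sdiff, hx, h]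
  have hnotin : ∀ o ∈ S \ Ahat, o ∉ Ahat := fun o ho => (Finset.mem_sdiff.mp ho).2
  have hcS : ∑ o ∈ S \ Ahat, c o ≤ κ :=
    le_trans (Finset.sum_le_sum_of_subset_of_nonneg (Finset.sdiff_subset)
      (fun i _ _ => hc i)) hS
  have hsum : ∑ o ∈ S \ Ahat, γ⁻¹ * (δ * c o * f Ahat / κ) ≤ γ⁻¹ * δ * f Ahat := by
    have : ∑ o ∈ S \ Ahat, γ⁻¹ * (δ * c o * f Ahat / κ)
        = (γ⁻¹ * δ * f Ahat / κ) * ∑ o ∈ S \ Ahat, c o := by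
      rw [Finset.mul_sum]; apply Finset.sum_congr rfl; intro x _; ring
    rw [this]
    have hco : 0 ≤ γ⁻¹ * δ * f Ahat / κ := by
      have := hnn Ahat; positivity
    calc (γ⁻¹ * δ * f Ahat / κ) * ∑ o ∈ S \ Ahat, c o
        ≤ (γ⁻¹ * δ * f Ahat / κ) * κ := mul_le_mul_of_nonneg_left hcS hco
      _ = γ⁻¹ * δ * f Ahat := by field_simp
  have hmain : f S ≤ (1 + γ⁻¹ * δ) * f Ahat := by
    have h1 : f S ≤ f (Ahat ∪ (S \ Ahat)) := hmono _ _ hSsub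
    have h2 := key (S \ Ahat) hnotin
    nlinarith
  have hd : 0 < 1 + γ⁻¹ * δ := by positivity
  rw [ge_iff_le, div_le_iff₀ hd]
  linarith [hmain]
end

section
/- Let f be a monotone γ-submodular nonnegative set function. Suppose Â is a set and B_0 = Â, B_i = B_{i-1} \ Ḃ_i for i = 1 to m ≤ n, where each deleted set Ḃ_i satisfies f(Ḃ_i) < (ε/n)·f(A_{j(i)}) for some subset A_{j(i)} ⊆ Â. Then f(B_m) ≥ (1 − γ⁻¹ε)·f(Â). -/
/-- Proposition (ahat-adot): if sets `Ḃᵢ` of small value (each `f(Ḃᵢ) < (ε/n) f(A_{j(i)})`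
for some `A_{j(i)} ⊆ Â`) are successively deleted from `B 0 = Â`, then after at most
`m ≤ n` deletions, `f(B m) ≥ (1 − γ⁻¹ ε) f(Â)`. -/
theorem deletion_value_loss {U : Type*} [DecidableEq U]
    (f : Finset U → ℝ) (γ ε : ℝ) (n m : ℕ)
    (hγ0 : 0 < γ) (hγ1 : γ ≤ 1) (hε : 0 < ε)
    (hn : 0 < n) (hmn : m ≤ n)
    (hnn : ∀ S : Finset U, 0 ≤ f S)
    (hmono : ∀ S T : Finset U, S ⊆ T → f S ≤ f T)
    (hsub : ∀ (S T : Finset U) (x : U), S ⊆ T → x ∉ T →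
      γ * (f (insert x T) - f T) ≤ f (insert x S) - f S)
    (Ahat : Finset U) (B Bdot Aj : ℕ → Finset U)
    (hB0 : B 0 = Ahat)
    (hBstep : ∀ i, 1 ≤ i → i ≤ m → B i = B (i - 1) \ Bdot i)
    (hAj : ∀ i, 1 ≤ i → i ≤ m → Aj i ⊆ Ahat)
    (hsmall : ∀ i, 1 ≤ i → i ≤ m → f (Bdot i) < (ε / n) * f (Aj i)) :
    f (B m) ≥ (1 - γ⁻¹ * ε) * f Ahat := by
  have hγinv : (0:ℝ) ≤ γ⁻¹ := inv_nonneg.mpr hγ0.le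
  have hnR : (0:ℝ) < n := by exact_mod_cast hn
  have key : ∀ (E T : Finset U), Disjoint E T → γ * (f (E ∪ T) - f T) ≤ f E - f ∅ := by
    intro E
    induction E using Finset.induction_on with
    | empty => intro T _; simp
    | @insert x E hx ih =>
      intro T hdisj
      have hxT : x ∉ E ∪ T := by
        simp only [Finset.mem_union]
        rintro (h | h)
        · exact hx h
        · exact (Finset.disjoint_left.mp hdisj (Finset.mem_insert_self x E)) h
      have h1 := hsub E (E ∪ T) x Finset.subset_union_left hxT
      have h2 := ih T (Finset.disjoint_of_subset_left (Finset.subset_insert x E) hdisj)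
      have heq : insert x E ∪ T = insert x (E ∪ T) := by rw [Finset.insert_union]
      rw [heq]
      linarith
  have step : ∀ i, 1 ≤ i → i ≤ m →
      f (B (i-1)) - f (B i) ≤ γ⁻¹ * ((ε / n) * f Ahat) := by
    intro i h1 h2
    have hE : (B (i-1) ∩ Bdot i) ∪ (B (i-1) \ Bdot i) = B (i-1) := by
      ext a; simp only [Finset.mem_union, Finset.mem_inter, Finset.mem_sdiff]; tauto
    have hd : Disjoint (B (i-1) ∩ Bdot i) (B (i-1) \ Bdot i) :=
      Finset.disjoint_of_subset_left Finset.inter_subset_right Finset.disjoint_sdiff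
    have hk := key _ _ hd
    rw [hE] at hk
    have hBi : B i = B (i-1) \ Bdot i := hBstep i h1 h2
    have hle : f (B (i-1) ∩ Bdot i) ≤ f (Bdot i) := hmono _ _ Finset.inter_subset_right
    have hAjle : f (Aj i) ≤ f Ahat := hmono _ _ (hAj i h1 h2)
    have hs := hsmall i h1 h2
    have h0 : 0 ≤ f ∅ := hnn ∅
    have hεn : (0:ℝ) ≤ ε / n := by positivity
    have hchain : γ * (f (B (i-1)) - f (B i)) ≤ (ε/n) * f Ahat := by
      rw [hBi]
      calc γ * (f (B (i-1)) - f (B (i-1) \ Bdot i))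
          ≤ f (B (i-1) ∩ Bdot i) - f ∅ := hk
        _ ≤ f (Bdot i) := by linarith
        _ ≤ (ε/n) * f (Aj i) := le_of_lt hs
        _ ≤ (ε/n) * f Ahat := by nlinarith
    rw [inv_mul_eq_div, le_div_iff₀ hγ0]
    nlinarith
  have main : ∀ k, k ≤ m → f Ahat - f (B k) ≤ k * (γ⁻¹ * ((ε/n) * f Ahat)) := by
    intro k
    induction k with
    | zero => intro _; rw [hB0]; simp
    | succ k ih =>
      intro hk
      have h1 := ih (le_trans (Nat.le_succ k) hk)
      have h2 := step (k+1) (Nat.le_add_left 1 k) hk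
      simp only [Nat.add_sub_cancel] at h2
      push_cast
      linarith
  have hM := main m le_rfl
  have hmR : (m:ℝ) ≤ n := by exact_mod_cast hmn
  have hA : 0 ≤ f Ahat := hnn Ahat
  have h1 : (m:ℝ) * (n:ℝ)⁻¹ ≤ 1 := by
    rw [← div_eq_mul_inv]
    exact (div_le_one hnR).mpr hmR
  have hc : (0:ℝ) ≤ γ⁻¹ * ε * f Ahat := by positivity
  have hfin : (m:ℝ) * (γ⁻¹ * ((ε/n) * f Ahat)) ≤ γ⁻¹ * ε * f Ahat := by
    calc (m:ℝ) * (γ⁻¹ * ((ε/n) * f Ahat))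
        = ((m:ℝ) * (n:ℝ)⁻¹) * (γ⁻¹ * ε * f Ahat) := by rw [div_eq_mul_inv]; ring
      _ ≤ 1 * (γ⁻¹ * ε * f Ahat) := mul_le_mul_of_nonneg_right h1 hc
      _ = γ⁻¹ * ε * f Ahat := one_mul _
  nlinarith
end

section
/- Let f be monotone γ-submodular with f(∅) ≥ 0 and let QuickPrune-Single be run on instance (U, c, f, κ) with parameters ε, δ > 0. Then the returned set U' contains a subset A' with c(A') ≤ κ and f(A') ≥ (δγ⁴(1 − εγ⁻¹) / (2(δγ² + 1)(1 + γ⁻¹δ)))·OPT, where OPT = max{f(S) : S ⊆ U, c(S) ≤ κ}. -/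
open scoped Classical

/-- State of the QuickPrune-Single algorithm: the current kept set `A`, the best
singleton seen so far `astar` (as a set, initially empty), and the checkpoint set `As`. -/
structure QPState (U : Type*) where
  A : Finset U
  astar : Finset U
  As : Finset U

/-- One step of QuickPrune-Single processing element `e`. -/
noncomputable def qpStep {U : Type*} [DecidableEq U]
    (f : Finset U → ℝ) (c : U → ℝ) (κ δ ε : ℝ) (n : ℕ)
    (s : QPState U) (e : U) : QPState U :=
  if c e > κ then s
  else
    let A1 := if f (insert e s.A) - f s.A ≥ δ * c e * f s.A / κ then insert e s.A else s.A
    let astar1 := if f {e} > f s.astar then {e} else s.astar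
    if f A1 > ((n : ℝ) / ε) * f s.As then ⟨A1 \ s.As, astar1, A1 \ s.As⟩
    else ⟨A1, astar1, s.As⟩

/-- QuickPrune-Single: one pass over the ground set (given as a list `elems`),
returning the pruned ground set `A ∪ {a*}`. -/
noncomputable def quickPruneSingle {U : Type*} [DecidableEq U]
    (f : Finset U → ℝ) (c : U → ℝ) (κ δ ε : ℝ) (elems : List U) : Finset U :=
  let s := elems.foldl (qpStep f c κ δ ε elems.length) ⟨∅, ∅, ∅⟩
  s.A ∪ s.astar

namespace QPAux

variable {U : Type*} [DecidableEq U]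

/-- Chain property: list of elements each added with the threshold rule,
with witness sets `B` containing the current prefix. -/
def ChainP (f : Finset U → ℝ) (c : U → ℝ) (κ δ : ℝ) : Finset U → List U → Prop
  | _, [] => True
  | P, e :: l => (c e ≤ κ ∧ e ∉ P ∧ ∃ B : Finset U, P ⊆ B ∧ e ∉ B ∧
      δ * c e * f B / κ ≤ f (insert e B) - f B) ∧ ChainP f c κ δ (insert e P) l

variable {f : Finset U → ℝ} {c : U → ℝ} {γ κ δ : ℝ}

lemma chainP_mono {P Q : Finset U} {l : List U} (hQP : Q ⊆ P)
    (h : ChainP f c κ δ P l) : ChainP f c κ δ Q l := by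
  induction l generalizing P Q with
  | nil => trivial
  | cons e l ih =>
    obtain ⟨⟨h1, h2, B, hB1, hB2, hB3⟩, hrest⟩ := h
    exact ⟨⟨h1, fun hx => h2 (hQP hx), B, hQP.trans hB1, hB2, hB3⟩,
      ih (Finset.insert_subset_insert _ hQP) hrest⟩

lemma chainP_append {P : Finset U} {l₁ l₂ : List U}
    (h₁ : ChainP f c κ δ P l₁) (h₂ : ChainP f c κ δ (P ∪ l₁.toFinset) l₂) :
    ChainP f c κ δ P (l₁ ++ l₂) := by
  induction l₁ generalizing P with
  | nil => simpa using chainP_mono (by simp) h₂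
  | cons e l ih =>
    obtain ⟨he, hrest⟩ := h₁
    refine ⟨he, ih hrest (chainP_mono ?_ h₂)⟩
    intro x hx
    simp only [Finset.mem_union, Finset.mem_insert, List.toFinset_cons] at hx ⊢
    tauto

lemma chainP_split {P : Finset U} {l₁ l₂ : List U}
    (h : ChainP f c κ δ P (l₁ ++ l₂)) :
    ChainP f c κ δ P l₁ ∧ ChainP f c κ δ (P ∪ l₁.toFinset) l₂ := by
  induction l₁ generalizing P with
  | nil => exact ⟨trivial, chainP_mono (by simp) h⟩
  | cons e l ih =>
    obtain ⟨he, hrest⟩ := h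
    obtain ⟨ha, hb⟩ := ih hrest
    refine ⟨⟨he, ha⟩, chainP_mono ?_ hb⟩
    intro x hx
    simp only [Finset.mem_union, Finset.mem_insert, List.toFinset_cons] at hx ⊢
    tauto

lemma chainP_disj {P : Finset U} {l : List U} (h : ChainP f c κ δ P l) :
    ∀ x ∈ l, x ∉ P := by
  induction l generalizing P with
  | nil => simp
  | cons e l ih =>
    obtain ⟨⟨_, h2, _⟩, hrest⟩ := h
    intro x hx
    rcases List.mem_cons.1 hx with rfl | hx
    · exact h2
    · exact fun hP => ih hrest x hx (Finset.mem_insert_of_mem hP)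

lemma chainP_nodup {P : Finset U} {l : List U} (h : ChainP f c κ δ P l) :
    l.Nodup := by
  induction l generalizing P with
  | nil => simp
  | cons e l ih =>
    obtain ⟨_, hrest⟩ := h
    refine List.nodup_cons.2 ⟨fun he => ?_, ih hrest⟩
    exact chainP_disj hrest e he (Finset.mem_insert_self _ _)

variable {f : Finset U → ℝ} {c : U → ℝ} {γ κ δ ε : ℝ}

lemma gensub (hγ0 : 0 < γ)
    (hmono : ∀ S T : Finset U, S ⊆ T → f S ≤ f T)
    (hsub : ∀ (S T : Finset U) (x : U), S ⊆ T → x ∉ T →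
      γ * (f (insert x T) - f T) ≤ f (insert x S) - f S)
    (S T R : Finset U) (hST : S ⊆ T) :
    γ * (f (T ∪ R) - f T) ≤ f (S ∪ R) - f S := by
  induction R using Finset.induction_on with
  | empty => simp
  | insert _ _ hx =>
    rename_i x R ih
    by_cases hxT : x ∈ T ∪ R
    · have h1 : T ∪ insert x R = T ∪ R := by
        rw [Finset.union_insert, Finset.insert_eq_self.2 hxT]
      have h2 : f (S ∪ R) ≤ f (S ∪ insert x R) := by
        apply hmono; intro y hy; simp only [Finset.mem_union, Finset.mem_insert] at hy ⊢; tauto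
      rw [h1]; linarith [ih]
    · have key := hsub (S ∪ R) (T ∪ R) x (Finset.union_subset_union hST (le_refl R)) hxT
      have h1 : T ∪ insert x R = insert x (T ∪ R) := by rw [Finset.union_insert]
      have h2 : S ∪ insert x R = insert x (S ∪ R) := by rw [Finset.union_insert]
      rw [h1, h2]
      nlinarith [ih]

lemma gensub0 (hγ0 : 0 < γ) (hf0 : 0 ≤ f ∅)
    (hmono : ∀ S T : Finset U, S ⊆ T → f S ≤ f T)
    (hsub : ∀ (S T : Finset U) (x : U), S ⊆ T → x ∉ T →
      γ * (f (insert x T) - f T) ≤ f (insert x S) - f S)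
    (T R : Finset U) :
    γ * (f (T ∪ R) - f T) ≤ f R := by
  have h := gensub (f := f) hγ0 hmono hsub ∅ T R (Finset.empty_subset T)
  rw [Finset.empty_union] at h
  linarith

lemma sum_map_nonneg (hc : ∀ u, 0 ≤ c u) (l : List U) : 0 ≤ (l.map c).sum := by
  apply List.sum_nonneg
  intro x hx
  obtain ⟨u, _, rfl⟩ := List.mem_map.1 hx
  exact hc u

lemma chain_growth (hγ0 : 0 < γ) (hδ : 0 < δ) (hκ : 0 < κ)
    (hc : ∀ u, 0 ≤ c u) (hnn : ∀ S : Finset U, 0 ≤ f S)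
    (hmono : ∀ S T : Finset U, S ⊆ T → f S ≤ f T)
    (hsub : ∀ (S T : Finset U) (x : U), S ⊆ T → x ∉ T →
      γ * (f (insert x T) - f T) ≤ f (insert x S) - f S) :
    ∀ (l : List U) (P : Finset U), ChainP f c κ δ P l →
    f P + (γ * δ / κ) * f P * (l.map c).sum ≤ f (P ∪ l.toFinset) := by
  intro l
  induction l with
  | nil => intro P _; simp
  | cons e l ih =>
    intro P h
    obtain ⟨⟨hce, heP, B, hPB, heB, hB⟩, hrest⟩ := h
    have hfP : 0 ≤ f P := hnn P
    have hfPB : f P ≤ f B := hmono _ _ hPB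
    have hkey := hsub P B e hPB heB
    have hstep : f P + γ * δ * c e * f P / κ ≤ f (insert e P) := by
      have h2 : δ * c e * f P / κ ≤ δ * c e * f B / κ :=
        (div_le_div_iff_of_pos_right hκ).mpr
          (mul_le_mul_of_nonneg_left hfPB (mul_nonneg hδ.le (hc e)))
      have h2' := mul_le_mul_of_nonneg_left h2 hγ0.le
      have h3' := mul_le_mul_of_nonneg_left hB hγ0.le
      have hring : γ * δ * c e * f P / κ = γ * (δ * c e * f P / κ) := by ring
      linarith
    have hIH := ih (insert e P) hrest
    have hset : P ∪ (e :: l).toFinset = insert e P ∪ l.toFinset := by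
      ext x
      simp only [List.toFinset_cons, Finset.mem_union, Finset.mem_insert]
      tauto
    rw [hset, List.map_cons, List.sum_cons]
    have hsum : 0 ≤ (l.map c).sum := sum_map_nonneg hc l
    have hPiP : f P ≤ f (insert e P) := hmono _ _ (Finset.subset_insert _ _)
    have hcoef : 0 ≤ γ * δ / κ := by positivity
    have hexp : γ * δ / κ * f P * (c e + (l.map c).sum) =
        γ * δ * c e * f P / κ + (γ * δ / κ * f P) * (l.map c).sum := by ring
    have hexp2 : γ * δ / κ * f (insert e P) * (l.map c).sum =
        (γ * δ / κ * f (insert e P)) * (l.map c).sum := by ring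
    linarith [mul_le_mul_of_nonneg_right (mul_le_mul_of_nonneg_left hPiP hcoef) hsum]

lemma find_split (hκ : 0 < κ) :
    ∀ l : List U, κ < (l.map c).sum →
    ∃ l₁ e l₂, l = l₁ ++ e :: l₂ ∧ (l₂.map c).sum ≤ κ ∧ κ < c e + (l₂.map c).sum := by
  intro l
  induction l with
  | nil => intro h; simp at h; linarith
  | cons e l ih =>
    intro h
    rw [List.map_cons, List.sum_cons] at h
    by_cases hl : (l.map c).sum ≤ κ
    · exact ⟨[], e, l, by simp, hl, h⟩
    · obtain ⟨l₁, e', l₂, rfl, h1, h2⟩ := ih (not_le.1 hl)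
      exact ⟨e :: l₁, e', l₂, by simp, h1, h2⟩

lemma sum_toFinset_nodup (g : U → ℝ) : ∀ (l : List U), l.Nodup →
    (∑ x ∈ l.toFinset, g x) = (l.map g).sum := by
  intro l
  induction l with
  | nil => simp
  | cons e l ih =>
    intro h
    obtain ⟨he, hl⟩ := List.nodup_cons.1 h
    rw [List.toFinset_cons, Finset.sum_insert (by simpa using he), List.map_cons,
      List.sum_cons, ih hl]

lemma extract (hγ0 : 0 < γ) (hγ1 : γ ≤ 1) (hδ : 0 < δ) (hκ : 0 < κ)
    (hc : ∀ u, 0 ≤ c u) (hf0 : 0 ≤ f ∅) (hnn : ∀ S : Finset U, 0 ≤ f S)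
    (hmono : ∀ S T : Finset U, S ⊆ T → f S ≤ f T)
    (hsub : ∀ (S T : Finset U) (x : U), S ⊆ T → x ∉ T →
      γ * (f (insert x T) - f T) ≤ f (insert x S) - f S)
    (ch : List U) (hch : ChainP f c κ δ ∅ ch) :
    ∃ A', A' ⊆ ch.toFinset ∧ (∑ x ∈ A', c x) ≤ κ ∧
      γ * δ / (1 + γ * δ) * (γ / 2) * f ch.toFinset ≤ f A' := by
  have hpos : (0:ℝ) < 1 + γ * δ := by nlinarith
  by_cases hcost : (ch.map c).sum ≤ κ
  · refine ⟨ch.toFinset, subset_rfl, ?_, ?_⟩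
    · rw [sum_toFinset_nodup c ch (chainP_nodup hch)]; exact hcost
    · have hF := hnn ch.toFinset
      have h1 : γ * δ / (1 + γ * δ) ≤ 1 := by
        rw [div_le_one hpos]; nlinarith
      have h3 : 0 ≤ γ * δ / (1 + γ * δ) := div_nonneg (by positivity) hpos.le
      have h4 : γ * δ / (1 + γ * δ) * (γ / 2) ≤ 1 := by nlinarith
      have h6 := mul_le_mul_of_nonneg_right h4 hF
      linarith
  · push_neg at hcost
    obtain ⟨l₁, e, l₂, rfl, hl₂, hel₂⟩ := find_split hκ ch hcost
    obtain ⟨hc1, hc2⟩ := chainP_split hch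
    rw [Finset.empty_union] at hc2
    set P := l₁.toFinset with hP
    set F := f (l₁ ++ e :: l₂).toFinset with hFdef
    have hc2' := hc2
    obtain ⟨⟨hce, heP, _⟩, hrest⟩ := hc2'
    have hFeq : P ∪ (e :: l₂).toFinset = (l₁ ++ e :: l₂).toFinset := by
      rw [List.toFinset_append]
    have hgrow := chain_growth hγ0 hδ hκ hc hnn hmono hsub (e :: l₂) P hc2
    rw [hFeq] at hgrow
    have hfP : 0 ≤ f P := hnn P
    have hF0 : 0 ≤ F := hnn _
    have hsum_ge : κ ≤ ((e :: l₂).map c).sum := by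
      rw [List.map_cons, List.sum_cons]; linarith
    have h5 : (1 + γ * δ) * f P ≤ F := by
      have ha : 0 ≤ γ * δ / κ * f P := by positivity
      have hb := mul_le_mul_of_nonneg_left hsum_ge ha
      have hd : γ * δ / κ * f P * κ = γ * δ * f P := by field_simp
      nlinarith
    have hs1 : γ * (f (insert e P) - f P) ≤ f {e} := by
      have h := hsub ∅ P e (Finset.empty_subset P) heP
      have h2 : insert e (∅ : Finset U) = {e} := by rfl
      rw [h2] at h
      linarith
    have hs2 : γ * (F - f (insert e P)) ≤ f l₂.toFinset := by
      have h := gensub0 hγ0 hf0 hmono hsub (insert e P) l₂.toFinset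
      have h2 : insert e P ∪ l₂.toFinset = (l₁ ++ e :: l₂).toFinset := by
        ext x
        simp only [Finset.mem_union, Finset.mem_insert, List.mem_toFinset, List.mem_append,
          List.mem_cons, hP]
        tauto
      rw [h2] at h
      exact h
    have hsum12 : γ * (F - f P) ≤ f {e} + f l₂.toFinset := by linarith
    have hkey : γ * γ * δ * F ≤ (1 + γ * δ) * (f {e} + f l₂.toFinset) := by
      have hm1 := mul_le_mul_of_nonneg_left hsum12 hpos.le
      have hm2 := mul_le_mul_of_nonneg_left h5 hγ0.le
      nlinarith
    have hrw : γ * δ / (1 + γ * δ) * (γ / 2) * F = γ * γ * δ * F / (2 * (1 + γ * δ)) := by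
      field_simp
    have hpos2 : (0:ℝ) < 2 * (1 + γ * δ) := by linarith
    by_cases hwhich : f l₂.toFinset ≤ f {e}
    · refine ⟨{e}, ?_, ?_, ?_⟩
      · intro x hx
        simp only [Finset.mem_singleton] at hx
        subst hx
        simp
      · rw [Finset.sum_singleton]; exact hce
      · rw [hrw, div_le_iff₀ hpos2]
        nlinarith
    · refine ⟨l₂.toFinset, ?_, ?_, ?_⟩
      · intro x hx
        simp only [List.mem_toFinset] at hx ⊢
        simp [hx]
      · rw [sum_toFinset_nodup c l₂ (chainP_nodup hrest)]; exact hl₂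
      · rw [hrw, div_le_iff₀ hpos2]
        nlinarith
lemma inv_scale (hγ0 : 0 < γ) {x y : ℝ} (h : γ * x ≤ y) : x ≤ γ⁻¹ * y := by
  have h2 := mul_le_mul_of_nonneg_left h (inv_nonneg.2 hγ0.le)
  rwa [← mul_assoc, inv_mul_cancel₀ hγ0.ne', one_mul] at h2

lemma mem_foldr_union {x : U} : ∀ (Ds : List (Finset U)),
    x ∈ Ds.foldr (· ∪ ·) ∅ ↔ ∃ D ∈ Ds, x ∈ D := by
  intro Ds
  induction Ds with
  | nil => simp
  | cons D Ds ih => simp [ih]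

lemma sum_le_length_mul {b : ℝ} : ∀ (Ds : List (Finset U)), (∀ D ∈ Ds, f D ≤ b) →
    (Ds.map f).sum ≤ Ds.length * b := by
  intro Ds
  induction Ds with
  | nil => simp
  | cons D Ds ih =>
    intro h
    rw [List.map_cons, List.sum_cons, List.length_cons]
    have h1 := h D (List.mem_cons_self)
    have h2 := ih (fun D hD => h D (List.mem_cons_of_mem _ hD))
    push_cast
    nlinarith [h2]

lemma optsum (hγ0 : 0 < γ) (hδ : 0 < δ) (hκ : 0 < κ) (hc : ∀ u, 0 ≤ c u)
    (hmono : ∀ S T : Finset U, S ⊆ T → f S ≤ f T)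
    (hsub : ∀ (S T : Finset U) (x : U), S ⊆ T → x ∉ T →
      γ * (f (insert x T) - f T) ≤ f (insert x S) - f S)
    (E : Finset U) (M : ℝ) (hM : 0 ≤ M) (O : Finset U)
    (h : ∀ o ∈ O, o ∉ E → ∃ B, B ⊆ E ∧ f (insert o B) - f B ≤ δ * c o * M / κ) :
    f (E ∪ O) ≤ f E + γ⁻¹ * (δ * M / κ) * (∑ o ∈ O, c o) := by
  induction O using Finset.induction_on with
  | empty => simp
  | insert _ _ hx =>
    rename_i o O' ih
    have hIH := ih (fun o' ho' hoE => h o' (Finset.mem_insert_of_mem ho') hoE)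
    rw [Finset.sum_insert hx, Finset.union_insert]
    have hcoef : 0 ≤ γ⁻¹ * (δ * M / κ) := by positivity
    have hco : 0 ≤ c o := hc o
    by_cases hoE : o ∈ E ∪ O'
    · rw [Finset.insert_eq_self.2 hoE]
      nlinarith
    · have hoE' : o ∉ E := fun hh => hoE (Finset.mem_union_left _ hh)
      obtain ⟨B, hBE, hBo⟩ := h o (Finset.mem_insert_self _ _) hoE'
      have hBsub : B ⊆ E ∪ O' := hBE.trans Finset.subset_union_left
      have hkey := hsub B (E ∪ O') o hBsub hoE
      have h2 : f (insert o (E ∪ O')) - f (E ∪ O') ≤ γ⁻¹ * (δ * c o * M / κ) :=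
        inv_scale hγ0 (by linarith)
      have hring : γ⁻¹ * (δ * c o * M / κ) = γ⁻¹ * (δ * M / κ) * c o := by ring
      linarith [hring ▸ h2]

lemma delsum (hγ0 : 0 < γ) (hf0 : 0 ≤ f ∅)
    (hmono : ∀ S T : Finset U, S ⊆ T → f S ≤ f T)
    (hsub : ∀ (S T : Finset U) (x : U), S ⊆ T → x ∉ T →
      γ * (f (insert x T) - f T) ≤ f (insert x S) - f S) :
    ∀ (Ds : List (Finset U)) (A : Finset U),
    f (A ∪ Ds.foldr (· ∪ ·) ∅) ≤ f A + γ⁻¹ * (Ds.map f).sum := by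
  intro Ds
  induction Ds with
  | nil => intro A; simp
  | cons D Ds ih =>
    intro A
    have hset : A ∪ (D :: Ds).foldr (· ∪ ·) ∅ = (A ∪ Ds.foldr (· ∪ ·) ∅) ∪ D := by
      simp only [List.foldr_cons]
      ext x
      simp only [Finset.mem_union]
      tauto
    rw [hset]
    have h1 := gensub0 hγ0 hf0 hmono hsub (A ∪ Ds.foldr (· ∪ ·) ∅) D
    have h2 : f ((A ∪ Ds.foldr (· ∪ ·) ∅) ∪ D) - f (A ∪ Ds.foldr (· ∪ ·) ∅) ≤ γ⁻¹ * f D :=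
      inv_scale hγ0 (by linarith)
    have h3 := ih A
    rw [List.map_cons, List.sum_cons]
    linarith [mul_le_mul_of_nonneg_left (le_refl ((Ds.map f).sum)) (inv_nonneg.2 hγ0.le)]
/-- The invariant maintained by the algorithm. -/
def Inv (f : Finset U → ℝ) (c : U → ℝ) (γ κ δ ε : ℝ) (n : ℕ)
    (proc : Finset U) (s : QPState U) : Prop :=
  ∃ (M : ℝ) (E : Finset U) (Ds : List (Finset U)) (ch₁ ch₂ : List U),
    s.A = (ch₁ ++ ch₂).toFinset ∧ s.As = ch₁.toFinset ∧
    ChainP f c κ δ ∅ (ch₁ ++ ch₂) ∧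
    s.A ⊆ E ∧ E ⊆ proc ∧
    E ⊆ s.A ∪ Ds.foldr (· ∪ ·) ∅ ∧
    (∀ D ∈ Ds, f D ≤ ε / n * M) ∧
    Ds.length ≤ proc.card ∧
    0 ≤ M ∧ f s.A ≤ M ∧ M * (1 - γ⁻¹ * ε / n) ^ proc.card ≤ f s.A ∧
    (∀ u ∈ proc, c u ≤ κ → u ∉ E →
      ∃ B, B ⊆ E ∧ f (insert u B) - f B ≤ δ * c u * M / κ)

lemma thresh_mono {δ κ : ℝ} (hδ : 0 < δ) (hκ : 0 < κ) {cu M M' : ℝ}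
    (hM : M ≤ M') (hcu : 0 ≤ cu) : δ * cu * M / κ ≤ δ * cu * M' / κ :=
  div_le_div_of_nonneg_right (mul_le_mul_of_nonneg_left hM (mul_nonneg hδ.le hcu)) hκ.le
lemma inv_post (hγ0 : 0 < γ) (hδ : 0 < δ) (hε : 0 < ε) (hκ : 0 < κ)
    (hc : ∀ u, 0 ≤ c u) (hf0 : 0 ≤ f ∅) (hnn : ∀ S : Finset U, 0 ≤ f S)
    (hmono : ∀ S T : Finset U, S ⊆ T → f S ≤ f T)
    (hsub : ∀ (S T : Finset U) (x : U), S ⊆ T → x ∉ T →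
      γ * (f (insert x T) - f T) ≤ f (insert x S) - f S)
    (n : ℕ) (hn : 1 ≤ n)
    (hr0 : (0:ℝ) < 1 - γ⁻¹ * ε / n) (hr1 : 1 - γ⁻¹ * ε / n ≤ 1)
    (proc' : Finset U) (As ast A1 : Finset U) (ch₁ T : List U)
    (M' : ℝ) (E' : Finset U) (Ds : List (Finset U))
    (hA1 : A1 = (ch₁ ++ T).toFinset)
    (hAs : As = ch₁.toFinset)
    (hch : ChainP f c κ δ ∅ (ch₁ ++ T))
    (hAE : A1 ⊆ E') (hEp : E' ⊆ proc')
    (hEDs : E' ⊆ A1 ∪ Ds.foldr (· ∪ ·) ∅)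
    (hDs : ∀ D ∈ Ds, f D ≤ ε / n * M')
    (hlen : Ds.length + 1 ≤ proc'.card)
    (hM0 : 0 ≤ M') (hfAM : f A1 ≤ M')
    (hMr : M' * (1 - γ⁻¹ * ε / n) ^ proc'.card ≤ f A1 * (1 - γ⁻¹ * ε / n))
    (hrej : ∀ u ∈ proc', c u ≤ κ → u ∉ E' →
      ∃ B, B ⊆ E' ∧ f (insert u B) - f B ≤ δ * c u * M' / κ) :
    Inv f c γ κ δ ε n proc'
      (if f A1 > ((n : ℝ) / ε) * f As then ⟨A1 \ As, ast, A1 \ As⟩ else ⟨A1, ast, As⟩) := by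
  have hn0 : (0:ℝ) < n := by exact_mod_cast hn
  have hεn : (0:ℝ) < ε / n := by positivity
  have hγi : (0:ℝ) < γ⁻¹ := inv_pos.2 hγ0
  by_cases hchk : f A1 > ((n : ℝ) / ε) * f As
  · rw [if_pos hchk]
    have hAsA1 : As ⊆ A1 := by
      rw [hAs, hA1, List.toFinset_append]; exact Finset.subset_union_left
    have hfAs : f As ≤ ε / n * f A1 := by
      have h1 : ε / n * (((n : ℝ) / ε) * f As) ≤ ε / n * f A1 :=
        mul_le_mul_of_nonneg_left hchk.le hεn.le
      have h2 : ε / n * (((n : ℝ) / ε) * f As) = f As := by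
        field_simp
      linarith
    have hnd : (ch₁ ++ T).Nodup := chainP_nodup hch
    have hdisj : Disjoint ch₁.toFinset T.toFinset :=
      List.disjoint_toFinset_iff_disjoint.2 (by intro a ha hb; exact (List.nodup_append.1 hnd).2.2 a ha a hb rfl)
    have hsd : A1 \ As = T.toFinset := by
      rw [hA1, hAs, List.toFinset_append, Finset.union_sdiff_cancel_left hdisj]
    have hdrop : f A1 * (1 - γ⁻¹ * ε / n) ≤ f (A1 \ As) := by
      have g1 := gensub0 hγ0 hf0 hmono hsub (A1 \ As) As
      rw [Finset.sdiff_union_of_subset hAsA1] at g1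
      have g2 : f A1 - f (A1 \ As) ≤ γ⁻¹ * f As := inv_scale hγ0 (by linarith)
      have g3 : γ⁻¹ * f As ≤ γ⁻¹ * (ε / n * f A1) := mul_le_mul_of_nonneg_left hfAs hγi.le
      have g4 : f A1 * (1 - γ⁻¹ * ε / n) = f A1 - γ⁻¹ * (ε / n * f A1) := by ring
      linarith
    refine ⟨M', E', Ds ++ [As], T, [], ?_, ?_, ?_, ?_, hEp, ?_, ?_, ?_, hM0, ?_, ?_, hrej⟩
    · show A1 \ As = (T ++ []).toFinset
      rw [List.append_nil, hsd]
    · show A1 \ As = T.toFinset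
      exact hsd
    · show ChainP f c κ δ ∅ (T ++ [])
      rw [List.append_nil]
      exact chainP_mono (Finset.empty_subset _) ((chainP_split hch).2)
    · show A1 \ As ⊆ E'
      exact (Finset.sdiff_subset).trans hAE
    · show E' ⊆ A1 \ As ∪ (Ds ++ [As]).foldr (· ∪ ·) ∅
      intro x hx
      have hx2 := hEDs hx
      rw [Finset.mem_union] at hx2 ⊢
      rcases hx2 with hx2 | hx2
      · by_cases hxAs : x ∈ As
        · right
          rw [mem_foldr_union]
          exact ⟨As, by simp, hxAs⟩
        · left
          rw [Finset.mem_sdiff]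
          exact ⟨hx2, hxAs⟩
      · right
        rw [mem_foldr_union] at hx2 ⊢
        obtain ⟨D, hD, hxD⟩ := hx2
        exact ⟨D, by simp [hD], hxD⟩
    · intro D hD
      rcases List.mem_append.1 hD with hD | hD
      · exact hDs D hD
      · rw [List.mem_singleton] at hD
        subst hD
        calc f D ≤ ε / n * f A1 := hfAs
          _ ≤ ε / n * M' := mul_le_mul_of_nonneg_left hfAM hεn.le
    · rw [List.length_append]
      simpa using hlen
    · show f (A1 \ As) ≤ M'
      exact (hmono _ _ Finset.sdiff_subset).trans hfAM
    · show M' * (1 - γ⁻¹ * ε / n) ^ proc'.card ≤ f (A1 \ As)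
      exact hMr.trans hdrop
  · rw [if_neg hchk]
    refine ⟨M', E', Ds, ch₁, T, hA1, hAs, hch, hAE, hEp, hEDs, hDs, by omega, hM0, hfAM, ?_, hrej⟩
    show M' * (1 - γ⁻¹ * ε / n) ^ proc'.card ≤ f A1
    have : f A1 * (1 - γ⁻¹ * ε / n) ≤ f A1 * 1 := mul_le_mul_of_nonneg_left hr1 (hnn _)
    rw [mul_one] at this
    exact hMr.trans this

lemma step (hγ0 : 0 < γ) (hγ1 : γ ≤ 1) (hδ : 0 < δ) (hε : 0 < ε) (hκ : 0 < κ)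
    (hc : ∀ u, 0 ≤ c u) (hf0 : 0 ≤ f ∅) (hnn : ∀ S : Finset U, 0 ≤ f S)
    (hmono : ∀ S T : Finset U, S ⊆ T → f S ≤ f T)
    (hsub : ∀ (S T : Finset U) (x : U), S ⊆ T → x ∉ T →
      γ * (f (insert x T) - f T) ≤ f (insert x S) - f S)
    (n : ℕ) (hn : 1 ≤ n) (hεγ : ε < γ)
    (e : U) (proc : Finset U) (s : QPState U)
    (he : e ∉ proc) (hI : Inv f c γ κ δ ε n proc s) :
    Inv f c γ κ δ ε n (insert e proc) (qpStep f c κ δ ε n s e) := by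
  obtain ⟨M, E, Ds, ch₁, ch₂, hA, hAs, hch, hAE, hEp, hEDs, hDs, hlen, hM0, hfAM, hMr, hrej⟩ := hI
  have hn0 : (0:ℝ) < n := by exact_mod_cast hn
  have hγi : (0:ℝ) < γ⁻¹ := inv_pos.2 hγ0
  have hr0 : (0:ℝ) < 1 - γ⁻¹ * ε / n := by
    have h1 : γ⁻¹ * ε < 1 := by
      rw [inv_mul_lt_iff₀ hγ0, mul_one]; exact hεγ
    have h2 : γ⁻¹ * ε / n ≤ γ⁻¹ * ε / 1 := by
      apply div_le_div_of_nonneg_left (by positivity) one_pos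
      exact_mod_cast hn
    simp only [div_one] at h2
    linarith
  have hr1 : 1 - γ⁻¹ * ε / n ≤ 1 := by
    have : (0:ℝ) ≤ γ⁻¹ * ε / n := by positivity
    linarith
  have hrj1 : (1 - γ⁻¹ * ε / n) ^ proc.card ≤ 1 := pow_le_one₀ hr0.le hr1
  have hcard : (insert e proc).card = proc.card + 1 := Finset.card_insert_of_notMem he
  have heE : e ∉ E := fun h => he (hEp h)
  have heA : e ∉ s.A := fun h => heE (hAE h)
  unfold qpStep
  by_cases hce : c e > κ
  · rw [if_pos hce]
    refine ⟨M, E, Ds, ch₁, ch₂, hA, hAs, hch, hAE,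
      hEp.trans (Finset.subset_insert _ _), hEDs, hDs, ?_, hM0, hfAM, ?_, ?_⟩
    · rw [hcard]; omega
    · rw [hcard, pow_succ, ← mul_assoc]
      calc M * (1 - γ⁻¹ * ε / n) ^ proc.card * (1 - γ⁻¹ * ε / n)
          ≤ M * (1 - γ⁻¹ * ε / n) ^ proc.card * 1 := by
            apply mul_le_mul_of_nonneg_left hr1 (by positivity)
        _ ≤ f s.A := by rw [mul_one]; exact hMr
    · intro u hu hcu huE
      rcases Finset.mem_insert.1 hu with rfl | hu
      · exact absurd hcu (not_le.2 hce)
      · exact hrej u hu hcu huE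
  · rw [if_neg hce]
    push_neg at hce
    simp only
    by_cases hadd : f (insert e s.A) - f s.A ≥ δ * c e * f s.A / κ
    · rw [if_pos hadd]
      set M' := max M (f (insert e s.A)) with hM'def
      have hMM' : M ≤ M' := le_max_left _ _
      have hM'0 : 0 ≤ M' := hM0.trans hMM'
      have hfA1M' : f (insert e s.A) ≤ M' := le_max_right _ _
      have hAA1 : s.A ⊆ insert e s.A := Finset.subset_insert _ _
      have hM'j : M' * (1 - γ⁻¹ * ε / n) ^ proc.card ≤ f (insert e s.A) := by
        rcases max_cases M (f (insert e s.A)) with ⟨hq, _⟩ | ⟨hq, _⟩ <;>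
          rw [← hM'def] at hq <;> rw [hq]
        · exact hMr.trans (hmono _ _ hAA1)
        · calc f (insert e s.A) * (1 - γ⁻¹ * ε / n) ^ proc.card
              ≤ f (insert e s.A) * 1 := mul_le_mul_of_nonneg_left hrj1 (hnn _)
            _ = f (insert e s.A) := mul_one _
      have hchain' : ChainP f c κ δ ∅ (ch₁ ++ (ch₂ ++ [e])) := by
        rw [← List.append_assoc]
        apply chainP_append hch
        refine ⟨⟨hce, ?_, ⟨s.A, ?_, heA, hadd⟩⟩, trivial⟩
        · rw [Finset.empty_union, ← hA]; exact heA
        · rw [Finset.empty_union, ← hA]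
      have hA1eq : insert e s.A = (ch₁ ++ (ch₂ ++ [e])).toFinset := by
        rw [hA]
        ext x
        simp only [Finset.mem_insert, List.toFinset_append, Finset.mem_union,
          List.toFinset_cons, List.toFinset_nil, LawfulSingleton.insert_empty_eq, Finset.mem_singleton,
          List.mem_toFinset]
        tauto
      apply inv_post hγ0 hδ hε hκ hc hf0 hnn hmono hsub n hn hr0 hr1 (insert e proc)
        s.As _ (insert e s.A) ch₁ (ch₂ ++ [e]) M' (insert e E) Ds hA1eq hAs hchain'
      · exact Finset.insert_subset_insert _ hAE
      · exact Finset.insert_subset_insert _ hEp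
      · intro x hx
        rcases Finset.mem_insert.1 hx with rfl | hx
        · exact Finset.mem_union_left _ (Finset.mem_insert_self _ _)
        · have := hEDs hx
          rw [Finset.mem_union] at this ⊢
          rcases this with h | h
          · exact Or.inl (Finset.mem_insert_of_mem h)
          · exact Or.inr h
      · intro D hD
        calc f D ≤ ε / n * M := hDs D hD
          _ ≤ ε / n * M' := mul_le_mul_of_nonneg_left hMM' (by positivity)
      · rw [hcard]; omega
      · exact hM'0
      · exact hfA1M'
      · rw [hcard, pow_succ, ← mul_assoc]
        exact mul_le_mul_of_nonneg_right hM'j hr0.le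
      · intro u hu hcu huE
        rcases Finset.mem_insert.1 hu with rfl | hu
        · exact absurd (Finset.mem_insert_self _ _) huE
        · obtain ⟨B, hBE, hB⟩ := hrej u hu hcu (fun h => huE (Finset.mem_insert_of_mem h))
          exact ⟨B, hBE.trans (Finset.subset_insert _ _),
            hB.trans (thresh_mono hδ hκ hMM' (hc u))⟩
    · rw [if_neg hadd]
      apply inv_post hγ0 hδ hε hκ hc hf0 hnn hmono hsub n hn hr0 hr1 (insert e proc)
        s.As _ s.A ch₁ ch₂ M E Ds hA hAs hch hAE
        (hEp.trans (Finset.subset_insert _ _)) hEDs hDs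
      · rw [hcard]; omega
      · exact hM0
      · exact hfAM
      · rw [hcard, pow_succ, ← mul_assoc]
        exact mul_le_mul_of_nonneg_right hMr hr0.le
      · intro u hu hcu huE
        rcases Finset.mem_insert.1 hu with rfl | hu
        · push_neg at hadd
          exact ⟨s.A, hAE, (le_of_lt hadd).trans (thresh_mono hδ hκ hfAM (hc u))⟩
        · obtain ⟨B, hBE, hB⟩ := hrej u hu hcu huE
          exact ⟨B, hBE, hB⟩
lemma fold_inv (hγ0 : 0 < γ) (hγ1 : γ ≤ 1) (hδ : 0 < δ) (hε : 0 < ε) (hκ : 0 < κ)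
    (hc : ∀ u, 0 ≤ c u) (hf0 : 0 ≤ f ∅) (hnn : ∀ S : Finset U, 0 ≤ f S)
    (hmono : ∀ S T : Finset U, S ⊆ T → f S ≤ f T)
    (hsub : ∀ (S T : Finset U) (x : U), S ⊆ T → x ∉ T →
      γ * (f (insert x T) - f T) ≤ f (insert x S) - f S)
    (n : ℕ) (hn : 1 ≤ n) (hεγ : ε < γ) :
    ∀ (l : List U) (proc : Finset U) (s : QPState U),
      l.Nodup → (∀ x ∈ l, x ∉ proc) → Inv f c γ κ δ ε n proc s →
      Inv f c γ κ δ ε n (proc ∪ l.toFinset) (l.foldl (qpStep f c κ δ ε n) s) := by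
  intro l
  induction l with
  | nil => intro proc s _ _ hI; simpa using hI
  | cons e l ih =>
    intro proc s hnd hfresh hI
    obtain ⟨hel, hndl⟩ := List.nodup_cons.1 hnd
    rw [List.foldl_cons]
    have h1 := step hγ0 hγ1 hδ hε hκ hc hf0 hnn hmono hsub n hn hεγ e proc s
      (hfresh e (List.mem_cons_self)) hI
    have h2 := ih (insert e proc) _ hndl
      (fun x hx => by
        rw [Finset.mem_insert]
        push_neg
        exact ⟨fun hxe => hel (hxe ▸ hx), hfresh x (List.mem_cons_of_mem _ hx)⟩) h1
    have hset : insert e proc ∪ l.toFinset = proc ∪ (e :: l).toFinset := by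
      ext x
      simp only [Finset.mem_union, Finset.mem_insert, List.toFinset_cons]
      tauto
    rwa [hset] at h2

lemma inv_init (hf0 : 0 ≤ f ∅) (n : ℕ) :
    Inv f c γ κ δ ε n ∅ (⟨∅, ∅, ∅⟩ : QPState U) := by
  refine ⟨f ∅, ∅, [], [], [], by simp, by simp, trivial, by simp, by simp, by simp,
    by simp, by simp, hf0, le_refl _, by simp, by simp⟩
end QPAux

set_option maxHeartbeats 2000000 in
open QPAux in
/-- Theorem (single, value part): the output `U'` of QuickPrune-Single contains a
feasible set `A'` with `f(A') ≥ (δγ⁴(1 − εγ⁻¹) / (2(δγ²+1)(1+γ⁻¹δ))) ⬝ OPT`, where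
`OPT = max{f(S) : c(S) ≤ κ}`. -/
theorem quickPruneSingle_value {U : Type*} [DecidableEq U] [Fintype U]
    (f : Finset U → ℝ) (c : U → ℝ) (γ κ δ ε : ℝ)
    (hγ0 : 0 < γ) (hγ1 : γ ≤ 1) (hδ : 0 < δ) (hε : 0 < ε) (hκ : 0 < κ)
    (hc : ∀ u, 0 ≤ c u)
    (hf0 : 0 ≤ f ∅)
    (hnn : ∀ S : Finset U, 0 ≤ f S)
    (hmono : ∀ S T : Finset U, S ⊆ T → f S ≤ f T)
    (hsub : ∀ (S T : Finset U) (x : U), S ⊆ T → x ∉ T →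
      γ * (f (insert x T) - f T) ≤ f (insert x S) - f S) :
    ∃ A' ⊆ quickPruneSingle f c κ δ ε (Finset.univ.toList : List U),
      (∑ x ∈ A', c x) ≤ κ ∧
      ∀ S : Finset U, (∑ x ∈ S, c x) ≤ κ →
        f A' ≥ (δ * γ ^ 4 * (1 - ε * γ⁻¹) /
          (2 * (δ * γ ^ 2 + 1) * (1 + γ⁻¹ * δ))) * f S := by
  have hγi : (0:ℝ) < γ⁻¹ := inv_pos.2 hγ0
  have hD : (0:ℝ) < 2 * (δ * γ ^ 2 + 1) * (1 + γ⁻¹ * δ) := by positivity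
  rcases le_or_gt γ ε with hεγ | hεγ
  · -- trivial case: the constant is nonpositive
    refine ⟨∅, Finset.empty_subset _, by simpa using hκ.le, ?_⟩
    intro S _
    have h1 : (1:ℝ) ≤ ε * γ⁻¹ := by
      have := mul_le_mul_of_nonneg_right hεγ hγi.le
      rwa [mul_inv_cancel₀ hγ0.ne'] at this
    have h2 : δ * γ ^ 4 * (1 - ε * γ⁻¹) ≤ 0 := by
      nlinarith [mul_nonneg (show (0:ℝ) ≤ ε * γ⁻¹ - 1 by linarith)
        (show (0:ℝ) ≤ δ * γ ^ 4 by positivity)]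
    have h3 : δ * γ ^ 4 * (1 - ε * γ⁻¹) / (2 * (δ * γ ^ 2 + 1) * (1 + γ⁻¹ * δ)) ≤ 0 :=
      div_nonpos_of_nonpos_of_nonneg h2 hD.le
    have := mul_nonpos_of_nonpos_of_nonneg h3 (hnn S)
    linarith [hf0]
  · -- main case
    have hq0 : (0:ℝ) < 1 - ε * γ⁻¹ := by
      have : ε * γ⁻¹ < γ * γ⁻¹ := mul_lt_mul_of_pos_right hεγ hγi
      rw [mul_inv_cancel₀ hγ0.ne'] at this
      linarith
    have hCpos : 0 ≤ δ * γ ^ 4 * (1 - ε * γ⁻¹) /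
        (2 * (δ * γ ^ 2 + 1) * (1 + γ⁻¹ * δ)) := by positivity
    rcases isEmpty_or_nonempty U with hU | hU
    · -- empty ground set
      have hlist : (Finset.univ.toList : List U) = [] := by
        simp [Finset.univ_eq_empty]
      refine ⟨∅, Finset.empty_subset _, by simpa using hκ.le, ?_⟩
      intro S _
      have hS : S = ∅ := Finset.eq_empty_of_isEmpty S
      subst hS
      have hC1 : δ * γ ^ 4 * (1 - ε * γ⁻¹) /
          (2 * (δ * γ ^ 2 + 1) * (1 + γ⁻¹ * δ)) ≤ 1 := by
        rw [div_le_one hD]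
        have hg42 : γ ^ 4 ≤ γ ^ 2 := pow_le_pow_of_le_one hγ0.le hγ1 (by norm_num)
        have ha : (0:ℝ) ≤ δ * γ ^ 4 := by positivity
        have hb : δ * γ ^ 4 * (1 - ε * γ⁻¹) ≤ δ * γ ^ 4 := by
          nlinarith [mul_nonneg ha (mul_pos hε hγi).le]
        have hc2 : δ * γ ^ 4 ≤ δ * γ ^ 2 := mul_le_mul_of_nonneg_left hg42 hδ.le
        have hd2 : 2 * (δ * γ ^ 2 + 1) ≤ 2 * (δ * γ ^ 2 + 1) * (1 + γ⁻¹ * δ) := by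
          nlinarith [mul_nonneg (show (0:ℝ) ≤ 2 * (δ * γ ^ 2 + 1) by positivity)
            (mul_pos hγi hδ).le]
        nlinarith [pow_pos hγ0 2]
      nlinarith [hf0]
    · -- nonempty ground set
      obtain ⟨n, hndef⟩ : ∃ n, n = (Finset.univ.toList : List U).length := ⟨_, rfl⟩
      have hncard : n = Fintype.card U := by
        rw [hndef, Finset.length_toList, Finset.card_univ]
      have hn : 1 ≤ n := by
        rw [hncard]
        exact Fintype.card_pos
      obtain ⟨sfin, hsfin⟩ :
          ∃ s, s = (Finset.univ.toList : List U).foldl (qpStep f c κ δ ε n) ⟨∅, ∅, ∅⟩ :=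
        ⟨_, rfl⟩
      have hQ : quickPruneSingle f c κ δ ε (Finset.univ.toList : List U) =
          sfin.A ∪ sfin.astar := by
        rw [hsfin, hndef]
        rfl
      have hInv : Inv f c γ κ δ ε n Finset.univ sfin := by
        rw [hsfin]
        have h := fold_inv hγ0 hγ1 hδ hε hκ hc hf0 hnn hmono hsub n hn hεγ
          (Finset.univ.toList : List U) ∅ ⟨∅, ∅, ∅⟩ (Finset.nodup_toList _)
          (by simp) (inv_init hf0 n)
        simpa using h
      obtain ⟨M, E, Ds, ch₁, ch₂, hA, hAs, hch, hAE, hEp, hEDs, hDs, hlen, hM0, hfAM,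
        hMr, hrej⟩ := hInv
      obtain ⟨A', hA'sub, hA'cost, hA'val⟩ := extract hγ0 hγ1 hδ hκ hc hf0 hnn hmono hsub
        (ch₁ ++ ch₂) hch
      rw [← hA] at hA'sub
      refine ⟨A', ?_, hA'cost, ?_⟩
      · rw [hQ]
        exact hA'sub.trans Finset.subset_union_left
      rw [← hA] at hA'val
      intro S hS
      set F := f sfin.A with hF
      have hF0 : 0 ≤ F := hnn _
      have hn0 : (0:ℝ) < n := by exact_mod_cast hn
      -- Bernoulli: M * (1 - ε γ⁻¹) ≤ F
      have hMq : M * (1 - ε * γ⁻¹) ≤ F := by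
        have hb := one_add_mul_le_pow (a := -(γ⁻¹ * ε / n))
          (by
            have h1 : γ⁻¹ * ε < 1 := by rw [inv_mul_lt_iff₀ hγ0, mul_one]; exact hεγ
            have h2 : 0 < γ⁻¹ * ε := mul_pos hγi hε
            have h3 : γ⁻¹ * ε / n ≤ γ⁻¹ * ε := by
              apply div_le_self h2.le
              exact_mod_cast hn
            nlinarith) n
        have hbeq : 1 + (n:ℝ) * -(γ⁻¹ * ε / n) = 1 - ε * γ⁻¹ := by
          field_simp
          ring
        have hb2 : 1 - ε * γ⁻¹ ≤ (1 - γ⁻¹ * ε / n) ^ n := by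
          rw [hbeq] at hb
          rw [show (1 : ℝ) - γ⁻¹ * ε / n = 1 + -(γ⁻¹ * ε / n) from by ring]
          exact hb
        have hcard : (Finset.univ : Finset U).card = n := by
          rw [Finset.card_univ, hncard]
        rw [hcard] at hMr
        calc M * (1 - ε * γ⁻¹) ≤ M * (1 - γ⁻¹ * ε / n) ^ n :=
              mul_le_mul_of_nonneg_left hb2 hM0
          _ ≤ F := hMr
      -- the OPT bound
      have hcS : ∀ o ∈ S, c o ≤ κ := by
        intro o ho
        calc c o ≤ ∑ x ∈ S, c x := Finset.single_le_sum (fun x _ => hc x) ho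
          _ ≤ κ := hS
      have h1 : f S ≤ f (E ∪ S) := hmono _ _ Finset.subset_union_right
      have h2 : f (E ∪ S) ≤ f E + γ⁻¹ * (δ * M / κ) * (∑ o ∈ S, c o) :=
        optsum hγ0 hδ hκ hc hmono hsub E M hM0 S
          (fun o ho hoE => hrej o (Finset.mem_univ o) (hcS o ho) hoE)
      have h3 : γ⁻¹ * (δ * M / κ) * (∑ o ∈ S, c o) ≤ γ⁻¹ * δ * M := by
        have hco : 0 ≤ γ⁻¹ * (δ * M / κ) := by positivity
        have := mul_le_mul_of_nonneg_left hS hco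
        have heq : γ⁻¹ * (δ * M / κ) * κ = γ⁻¹ * δ * M := by field_simp
        linarith
      have h4 : f E ≤ f (sfin.A ∪ Ds.foldr (· ∪ ·) ∅) := hmono _ _ hEDs
      have h5 := delsum hγ0 hf0 hmono hsub Ds sfin.A
      have h6 := sum_le_length_mul Ds hDs
      have h7 : (Ds.length : ℝ) * (ε / n * M) ≤ ε * M := by
        have hlenn : (Ds.length : ℝ) ≤ n := by
          have h9 : Ds.length ≤ n := by
            calc Ds.length ≤ (Finset.univ : Finset U).card := hlen
              _ = n := by rw [Finset.card_univ, hncard]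
          exact_mod_cast h9
        have hεnM : 0 ≤ ε / n * M := by positivity
        calc (Ds.length : ℝ) * (ε / n * M) ≤ n * (ε / n * M) :=
              mul_le_mul_of_nonneg_right hlenn hεnM
          _ = ε * M := by field_simp
      have h8 : γ⁻¹ * (Ds.map f).sum ≤ γ⁻¹ * (ε * M) := by
        apply mul_le_mul_of_nonneg_left _ hγi.le
        exact h6.trans h7
      have hOPT : f S ≤ F + γ⁻¹ * δ * M + γ⁻¹ * ε * M := by
        have : γ⁻¹ * (ε * M) = γ⁻¹ * ε * M := by ring
        linarith
      -- combine
      have hqFS : (1 - ε * γ⁻¹) * f S ≤ F * (1 + γ⁻¹ * δ) := by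
        have hm := mul_le_mul_of_nonneg_left hOPT hq0.le
        have hδε : 0 ≤ γ⁻¹ * δ := by positivity
        have hδε2 : 0 ≤ γ⁻¹ * ε := by positivity
        have hmd : γ⁻¹ * δ * (M * (1 - ε * γ⁻¹)) ≤ γ⁻¹ * δ * F :=
          mul_le_mul_of_nonneg_left hMq hδε
        have hme : γ⁻¹ * ε * (M * (1 - ε * γ⁻¹)) ≤ γ⁻¹ * ε * F :=
          mul_le_mul_of_nonneg_left hMq hδε2
        nlinarith [hm, hmd, hme]
      set k₀ := δ * γ ^ 4 / (2 * (δ * γ ^ 2 + 1) * (1 + γ⁻¹ * δ)) with hk₀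
      have hk₀0 : 0 ≤ k₀ := by positivity
      have hCeq : δ * γ ^ 4 * (1 - ε * γ⁻¹) /
          (2 * (δ * γ ^ 2 + 1) * (1 + γ⁻¹ * δ)) * f S = k₀ * ((1 - ε * γ⁻¹) * f S) := by
        rw [hk₀]; ring
      have hstep1 : k₀ * ((1 - ε * γ⁻¹) * f S) ≤ k₀ * (F * (1 + γ⁻¹ * δ)) :=
        mul_le_mul_of_nonneg_left hqFS hk₀0
      have hcanc : k₀ * (1 + γ⁻¹ * δ) = δ * γ ^ 4 / (2 * (δ * γ ^ 2 + 1)) := by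
        rw [hk₀]
        have h1 : (0:ℝ) < 1 + γ⁻¹ * δ := by positivity
        have h2 : (0:ℝ) < δ * γ ^ 2 + 1 := by positivity
        field_simp
      have hkk : δ * γ ^ 4 / (2 * (δ * γ ^ 2 + 1)) ≤ γ * δ / (1 + γ * δ) * (γ / 2) := by
        have hp1 : (0:ℝ) < 2 * (δ * γ ^ 2 + 1) := by positivity
        have hp2 : (0:ℝ) < 1 + γ * δ := by positivity
        rw [div_le_iff₀ hp1]
        have hg42 : γ ^ 4 ≤ γ ^ 2 := pow_le_pow_of_le_one hγ0.le hγ1 (by norm_num)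
        have hg53 : γ ^ 5 ≤ γ ^ 3 := pow_le_pow_of_le_one hγ0.le hγ1 (by norm_num)
        have hexp : γ * δ / (1 + γ * δ) * (γ / 2) * (2 * (δ * γ ^ 2 + 1)) =
            (γ ^ 2 * δ * (δ * γ ^ 2 + 1)) / (1 + γ * δ) := by ring
        rw [hexp, le_div_iff₀ hp2]
        have hg54 : γ ^ 5 ≤ γ ^ 4 := pow_le_pow_of_le_one hγ0.le hγ1 (by norm_num)
        nlinarith [mul_le_mul_of_nonneg_left hg42 hδ.le,
          mul_le_mul_of_nonneg_left hg54 (mul_nonneg hδ.le hδ.le)]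
      have hfin : k₀ * (F * (1 + γ⁻¹ * δ)) ≤ γ * δ / (1 + γ * δ) * (γ / 2) * F := by
        have : k₀ * (F * (1 + γ⁻¹ * δ)) = k₀ * (1 + γ⁻¹ * δ) * F := by ring
        rw [this, hcanc]
        exact mul_le_mul_of_nonneg_right hkk hF0
      rw [ge_iff_le, hCeq]
      exact hstep1.trans (hfin.trans hA'val)
end

section
/- Let f be monotone γ-submodular and let X ⊆ U' satisfy f(X) ≥ α·f(O_i) for all i, where {O_1, O_2, O_3} partitions an optimal solution O for budget κ' and each c(O_i) ≤ τ ≤ κ'. Then the best feasible solution within U' for budget κ' satisfies f_{κ'}(U') ≥ (αγ/3)·f_{κ'}(U). -/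
lemma gamma_subadd {U : Type*} [DecidableEq U]
    (f : Finset U → ℝ) (γ : ℝ) (hγ0 : 0 < γ)
    (hmono : ∀ S T : Finset U, S ⊆ T → f S ≤ f T)
    (hsub : ∀ (S T : Finset U) (x : U), S ⊆ T → x ∉ T →
      γ * (f (insert x T) - f T) ≤ f (insert x S) - f S)
    (S T : Finset U) :
    γ * (f (S ∪ T) - f S) ≤ f T - f ∅ := by
  classical
  induction T using Finset.induction_on with
  | empty => simp
  | @insert a T ha ih =>
    have key : γ * (f (S ∪ insert a T) - f (S ∪ T)) ≤ f (insert a T) - f T := by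
      by_cases haS : a ∈ S ∪ T
      · have : S ∪ insert a T = S ∪ T := by
          ext x; simp only [Finset.mem_union, Finset.mem_insert]
          constructor
          · rintro (h | rfl | h)
            · exact Or.inl h
            · simpa using haS
            · exact Or.inr h
          · rintro (h | h); exacts [Or.inl h, Or.inr (Or.inr h)]
        rw [this]
        simp only [sub_self, mul_zero]
        have := hmono T (insert a T) (Finset.subset_insert a T)
        linarith
      · have h := hsub T (S ∪ T) a Finset.subset_union_right haS
        have : S ∪ insert a T = insert a (S ∪ T) := by
          ext x; simp [Finset.mem_union, Finset.mem_insert]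
        rw [this]; exact h
    have : γ * (f (S ∪ insert a T) - f S)
        = γ * (f (S ∪ insert a T) - f (S ∪ T)) + γ * (f (S ∪ T) - f S) := by ring
    linarith

/-- If `X ⊆ U'` is feasible for budget `τ ≤ κ'` and satisfies `f(X) ≥ α f(Oᵢ)` for each
part of a partition `{O₁,O₂,O₃}` of an optimal solution `O` for budget `κ'` (with each
`c(Oᵢ) ≤ τ`), then `f_{κ'}(U') ≥ (αγ/3) f_{κ'}(U)`. -/
theorem pruned_universe_value {U : Type*} [DecidableEq U] [Fintype U]
    (f : Finset U → ℝ) (c : U → ℝ) (γ α τ κ' : ℝ)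
    (hγ0 : 0 < γ) (hγ1 : γ ≤ 1) (hα0 : 0 ≤ α) (hα1 : α ≤ 1)
    (hτκ : τ ≤ κ')
    (hc : ∀ u, 0 ≤ c u)
    (hnn : ∀ S : Finset U, 0 ≤ f S)
    (hmono : ∀ S T : Finset U, S ⊆ T → f S ≤ f T)
    (hsub : ∀ (S T : Finset U) (x : U), S ⊆ T → x ∉ T →
      γ * (f (insert x T) - f T) ≤ f (insert x S) - f S)
    (U' X O O₁ O₂ O₃ : Finset U)
    (hXU' : X ⊆ U') (hXfeas : (∑ x ∈ X, c x) ≤ τ)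
    (hOfeas : (∑ x ∈ O, c x) ≤ κ')
    (hOopt : ∀ T : Finset U, (∑ x ∈ T, c x) ≤ κ' → f T ≤ f O)
    (hd12 : Disjoint O₁ O₂) (hd13 : Disjoint O₁ O₃) (hd23 : Disjoint O₂ O₃)
    (hunion : O₁ ∪ O₂ ∪ O₃ = O)
    (hcO₁ : (∑ x ∈ O₁, c x) ≤ τ) (hcO₂ : (∑ x ∈ O₂, c x) ≤ τ)
    (hcO₃ : (∑ x ∈ O₃, c x) ≤ τ)
    (h1 : f X ≥ α * f O₁) (h2 : f X ≥ α * f O₂) (h3 : f X ≥ α * f O₃) :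
    ∃ S ⊆ U', (∑ x ∈ S, c x) ≤ κ' ∧
      ∀ T : Finset U, (∑ x ∈ T, c x) ≤ κ' → f S ≥ (α * γ / 3) * f T := by
  refine ⟨X, hXU', le_trans hXfeas hτκ, fun T hT => ?_⟩
  have hA := gamma_subadd f γ hγ0 hmono hsub O₁ O₂
  have hB := gamma_subadd f γ hγ0 hmono hsub (O₁ ∪ O₂) O₃
  rw [hunion] at hB
  have hγO₁ : γ * f O₁ ≤ f O₁ := by nlinarith [hnn O₁]
  have hγ12 : γ * f O ≤ f O₁ + f O₂ + f O₃ := by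
    have he := hnn (∅ : Finset U)
    linarith
  have hTO := hOopt T hT
  have hTnn := hnn T
  nlinarith [hnn O, mul_le_mul_of_nonneg_left hγ12 hα0,
    mul_le_mul_of_nonneg_left hTO (mul_nonneg hα0 hγ0.le)]
end
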